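/- arXiv:0808.2833 — 4 statements merged into one kernel-verified Lean document; each statement's English description precedes it below -/
import Mathlib

section
/- Let g_1,…,g_n : Σ* → ℝ be functions such that C(p) ⊆ span{g_1,…,g_n}, and let v_0, v_1, …, v_m ∈ Σ* satisfy (g_1(v_0),…,g_n(v_0)) ∈ span{(g_1(v_j),…,g_n(v_j)) : j=1,…,m} in ℝ^n. Then for every w ∈ Σ*, p_{w v_0} ∈ span{p_{w v_j} : j=1,…,m} in ℝ^{Σ*}. In particular (taking w = ∅), p_{v_0} ∈ span{p_{v_1},…,p_{v_m}}. -/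
open Submodule

theorem exists_apply_eq_sum_of_mem_span {X R ι κ : Type*} [CommSemiring R] [Fintype κ]
    (g : ι → X → R) {x₀ : X} {xs : κ → X}
    (hv : (fun i => g i x₀) ∈ span R (Set.range fun j i => g i (xs j))) :
    ∃ c : κ → R, ∀ q ∈ span R (Set.range g), q x₀ = ∑ j, c j * q (xs j) := by
  obtain ⟨c, hc⟩ := (mem_span_range_iff_exists_fun R).1 hv
  refine ⟨c, fun q hq => ?_⟩
  let lhs : (X → R) →ₗ[R] R := LinearMap.proj x₀
  let rhs : (X → R) →ₗ[R] R := ∑ j, c j • LinearMap.proj (xs j)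
  have hgen : Set.EqOn lhs rhs (Set.range g) := by
    rintro _ ⟨i, rfl⟩
    simpa [lhs, rhs] using (congrFun hc i).symm
  simpa [lhs, rhs] using LinearMap.eqOn_span hgen hq

theorem col_span_transfer_general {Sig : Type*} (p : List Sig → ℝ)
    {n m : ℕ} (g : Fin n → (List Sig → ℝ))
    (hC : Submodule.span ℝ {f : List Sig → ℝ | ∃ w : List Sig, f = fun v => p (w ++ v)} ≤
          Submodule.span ℝ (Set.range g))
    (v₀ : List Sig) (vs : Fin m → List Sig)
    (hv : (fun i => g i v₀) ∈
          Submodule.span ℝ (Set.range fun j => fun i => g i (vs j))) :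
    (∀ w : List Sig,
      (fun u => p (u ++ (w ++ v₀))) ∈
        Submodule.span ℝ (Set.range fun j => fun u => p (u ++ (w ++ vs j)))) ∧
    (fun u => p (u ++ v₀)) ∈
      Submodule.span ℝ (Set.range fun j => fun u => p (u ++ vs j)) := by
  obtain ⟨c, hc⟩ := exists_apply_eq_sum_of_mem_span g hv
  have hshift : ∀ w : List Sig,
      (fun u => p (u ++ (w ++ v₀))) ∈
        span ℝ (Set.range fun j => fun u => p (u ++ (w ++ vs j))) := by
    intro w
    refine (mem_span_range_iff_exists_fun ℝ).2 ⟨c, funext fun u => ?_⟩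
    have hrow := hc _ (hC (subset_span ⟨u ++ w, rfl⟩))
    simpa [List.append_assoc] using hrow.symm
  exact ⟨hshift, by simpa using hshift []⟩

/-- If the column space of `p` is contained in the span of `g 1, …, g n`, and the
vector `(g i v₀)_i` lies in the span of the vectors `(g i (vs j))_i`, then for every
word `w`, `p_{w v₀}` lies in the span of the `p_{w (vs j)}`.  In particular (w = ∅)
`p_{v₀}` lies in the span of the `p_{vs j}`. -/
theorem col_span_transfer {Sig : Type*} [Fintype Sig] (p : List Sig → ℝ)
    {n m : ℕ} (g : Fin n → (List Sig → ℝ))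
    (hC : Submodule.span ℝ {f : List Sig → ℝ | ∃ w : List Sig, f = fun v => p (w ++ v)} ≤
          Submodule.span ℝ (Set.range g))
    (v₀ : List Sig) (vs : Fin m → List Sig)
    (hv : (fun i => g i v₀) ∈
          Submodule.span ℝ (Set.range fun j => fun i => g i (vs j))) :
    (∀ w : List Sig,
      (fun u => p (u ++ (w ++ v₀))) ∈
        Submodule.span ℝ (Set.range fun j => fun u => p (u ++ (w ++ vs j)))) ∧
    (fun u => p (u ++ v₀)) ∈
      Submodule.span ℝ (Set.range fun j => fun u => p (u ++ vs j)) :=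
  col_span_transfer_general p g hC v₀ vs hv
end

section
/- If in the situation of the previous lemma (g_1(v_0),…,g_n(v_0)) = Σ_j β_j (g_1(v_j),…,g_n(v_j)) with coefficients β_j independent of any word, then the identity p_{v_0} = Σ_j β_j p_{v_j} holds as functions on Σ*, i.e., p(u v_0) = Σ_j β_j p(u v_j) for every u ∈ Σ*. -/
theorem apply_eq_sum_of_mem_span {R X ι κ : Type*} [CommSemiring R] [Fintype κ]
    {g : ι → X → R} {x₀ : X} {xs : κ → X} {β : κ → R}
    (hg : ∀ i, g i x₀ = ∑ j, β j * g i (xs j)) {f : X → R}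
    (hf : f ∈ Submodule.span R (Set.range g)) :
    f x₀ = ∑ j, β j * f (xs j) := by
  induction hf using Submodule.span_induction with
  | mem f hf =>
    obtain ⟨i, rfl⟩ := hf
    exact hg i
  | zero => simp
  | add f f' _ _ hf hf' =>
    simp only [Pi.add_apply, hf, hf', mul_add, Finset.sum_add_distrib]
  | smul c f _ hf =>
    simp only [Pi.smul_apply, smul_eq_mul, hf, Finset.mul_sum, mul_left_comm]

theorem col_coeff_transfer_general {Sig : Type*} (p : List Sig → ℝ)
    {n m : ℕ} (g : Fin n → (List Sig → ℝ))
    (hC : Submodule.span ℝ {f : List Sig → ℝ | ∃ w : List Sig, f = fun v => p (w ++ v)} ≤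
          Submodule.span ℝ (Set.range g))
    (v₀ : List Sig) (vs : Fin m → List Sig) (β : Fin m → ℝ)
    (hβ : ∀ i : Fin n, g i v₀ = ∑ j : Fin m, β j * g i (vs j)) :
    ∀ u : List Sig, p (u ++ v₀) = ∑ j : Fin m, β j * p (u ++ vs j) :=
  fun u => apply_eq_sum_of_mem_span hβ (hC (Submodule.subset_span ⟨u, rfl⟩))

/-- If `(g i v₀)_i = Σ_j β j • (g i (vs j))_i` with coefficients `β j` independent of
the word, and the column space of `p` is contained in the span of the `g i`, then
`p(u v₀) = Σ_j β j * p(u (vs j))` for every word `u`. -/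
theorem col_coeff_transfer {Sig : Type*} [Fintype Sig] (p : List Sig → ℝ)
    {n m : ℕ} (g : Fin n → (List Sig → ℝ))
    (hC : Submodule.span ℝ {f : List Sig → ℝ | ∃ w : List Sig, f = fun v => p (w ++ v)} ≤
          Submodule.span ℝ (Set.range g))
    (v₀ : List Sig) (vs : Fin m → List Sig) (β : Fin m → ℝ)
    (hβ : ∀ i : Fin n, g i v₀ = ∑ j : Fin m, β j * g i (vs j)) :
    ∀ u : List Sig, p (u ++ v₀) = ∑ j : Fin m, β j * p (u ++ vs j) :=
  col_coeff_transfer_general p g hC v₀ vs β hβ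
end

section
/- Let p and q be probability functions of two finitary processes over Σ, and let (I,J) be a basis for p, i.e., the matrix P_{IJ} = [p(wv)]_{v∈I, w∈J} has rank equal to dim(p) and |I| = |J| = dim(p). If (I,J) is also a basis for q and p(v) = q(v), p(wv) = q(wv), p(wav) = q(wav) for all v ∈ I, w ∈ J, a ∈ Σ, then p = q identically on Σ*. -/
/-!
Since `P_{JI}` has rank `dim p`, the functions `p_v` (`v ∈ I`) span the row space of `p` and the
columns of `P_{JI}` are independent, so every `p_x` is a unique combination of the `p_v` and the
coefficients can be read off on `J`. The data on `I`, `J` and `J Σ I` thus give the same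
coefficients for `p_{av}` and `q_{av}`, and induction on `u` yields `p(uv) = q(uv)` for `v ∈ I`.

The difference `h = p - q` is then an additive combination of the `q_v` that vanishes on every
word ending in `I`. Expanding `K q - n h ≥ 0` along `I` shows that `n h ≤ K q` implies
`(n + 1) h ≤ K q` for a fixed `K`, so `h ≤ 0`; by symmetry `p = q`.
-/

/-- The row space `R(p)` of `p`. -/
def rowSpan {Sig : Type*} (p : List Sig → ℝ) : Submodule ℝ (List Sig → ℝ) :=
  Submodule.span ℝ {f : List Sig → ℝ | ∃ v : List Sig, f = fun u => p (u ++ v)}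

/-- The dimension of a finitary process. -/
noncomputable def dimP {Sig : Type*} (p : List Sig → ℝ) : ℕ :=
  Module.finrank ℝ (rowSpan p)

/-- `(I, J)` is a basis for `p`: the matrix `P_{IJ} = [p(wv)]` has rank `dim p`
and `|I| = |J| = dim p`. -/
def IsBasisPair {Sig : Type*} (p : List Sig → ℝ) (I J : Finset (List Sig)) : Prop :=
  (Matrix.of fun (w : J) (v : I) => p ((w : List Sig) ++ (v : List Sig))).rank = dimP p ∧
    I.card = dimP p ∧ J.card = dimP p

theorem Matrix.mulVec_injective_of_rank_eq_card {m n K : Type*} [Fintype n] [Field K]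
    {M : Matrix m n K} (h : M.rank = Fintype.card n) : Function.Injective M.mulVec :=
  mulVec_injective_iff.mpr <| linearIndependent_iff_card_eq_finrank_span.mpr <| by
    rw [Set.finrank, ← rank_eq_finrank_span_cols, h]

section LinearAlgebra

variable {Sig : Type*} {p : List Sig → ℝ} {I J : Finset (List Sig)}

theorem rowSpan_eq_span_of_rank_eq [FiniteDimensional ℝ (rowSpan p)]
    (hrank : (Matrix.of fun (w : J) (v : I) => p ((w : List Sig) ++ (v : List Sig))).rank =
      dimP p) :
    rowSpan p = Submodule.span ℝ (Set.range fun (v : I) (u : List Sig) => p (u ++ v)) := by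
  set W := Submodule.span ℝ (Set.range fun (v : I) (u : List Sig) => p (u ++ v))
  have hW : W ≤ rowSpan p := Submodule.span_le.mpr <| by
    rintro _ ⟨v, rfl⟩
    exact Submodule.subset_span ⟨v, rfl⟩
  have : FiniteDimensional ℝ W := Submodule.finiteDimensional_of_le hW
  -- Restricting `W` to the words of `J` gives the column space of `P_{JI}`.
  have hres : W.map (LinearMap.funLeft ℝ ℝ ((↑) : J → List Sig)) =
      Submodule.span ℝ (Set.range (Matrix.of fun (w : J) (v : I) =>
        p ((w : List Sig) ++ (v : List Sig))).col) := by
    rw [Submodule.map_span, ← Set.range_comp]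
    rfl
  have hdim : dimP p ≤ Module.finrank ℝ W := by
    rw [← hrank, Matrix.rank_eq_finrank_span_cols, ← hres]
    exact Submodule.finrank_map_le _ W
  exact (Submodule.eq_of_le_of_finrank_le hW hdim).symm

theorem exists_sum_of_rank_eq [FiniteDimensional ℝ (rowSpan p)]
    (hrank : (Matrix.of fun (w : J) (v : I) => p ((w : List Sig) ++ (v : List Sig))).rank =
      dimP p) (x : List Sig) :
    ∃ c : I → ℝ, ∀ u, p (u ++ x) = ∑ v : I, c v * p (u ++ v) := by
  have hx : (fun u => p (u ++ x)) ∈ rowSpan p := Submodule.subset_span ⟨x, rfl⟩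
  rw [rowSpan_eq_span_of_rank_eq hrank, Submodule.mem_span_range_iff_exists_fun] at hx
  obtain ⟨c, hc⟩ := hx
  refine ⟨c, fun u => ?_⟩
  simpa using (congrFun hc u).symm

end LinearAlgebra

section Positivity

variable {Sig : Type*} [Fintype Sig] {ι : Type*} [Fintype ι] {s : ι → List Sig}
  {r h : List Sig → ℝ}

theorem apply_append_le (hr0 : ∀ u, 0 ≤ r u) (hradd : ∀ u, ∑ a, r (u ++ [a]) = r u)
    (u x : List Sig) : r (u ++ x) ≤ r u := by
  induction x generalizing u with
  | nil => simp
  | cons a x ih =>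
    calc r (u ++ a :: x) = r (u ++ [a] ++ x) := by simp
      _ ≤ r (u ++ [a]) := ih _
      _ ≤ r u := hradd u ▸ Finset.single_le_sum (fun b _ => hr0 (u ++ [b])) (Finset.mem_univ a)

theorem sum_mul_apply_append_le (hr0 : ∀ u, 0 ≤ r u) (hradd : ∀ u, ∑ a, r (u ++ [a]) = r u)
    (γ : ι → ℝ) (u : List Sig) :
    ∑ i, γ i * r (u ++ s i) ≤ (∑ i, |γ i| + 1) * r u := by
  calc ∑ i, γ i * r (u ++ s i) ≤ ∑ i, |γ i| * r u :=
        Finset.sum_le_sum fun i _ => mul_le_mul (le_abs_self _)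
          (apply_append_le hr0 hradd u (s i)) (hr0 _) (abs_nonneg _)
    _ ≤ (∑ i, |γ i| + 1) * r u := by rw [← Finset.sum_mul]; nlinarith [hr0 u]

/-- The bound `n * h ≤ K * r` improves to `(n + 1) * h ≤ K * r`: apply the expansion of `r` to
the nonnegative additive function `K * r - n * h`, which agrees with `K * r` on the words
ending in some `s i`. -/
theorem succ_mul_le_of_mul_le (hr0 : ∀ u, 0 ≤ r u) (hradd : ∀ u, ∑ a, r (u ++ [a]) = r u)
    (hhadd : ∀ u, ∑ a, h (u ++ [a]) = h u) {β γ : ι → ℝ}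
    (hβ : ∀ u, r u = ∑ i, β i * r (u ++ s i)) (hγ : ∀ u, h u = ∑ i, γ i * r (u ++ s i))
    (hvan : ∀ u i, h (u ++ s i) = 0) {n : ℝ}
    (hn : ∀ u, n * h u ≤ (∑ i, |β i| + 1) * (∑ i, |γ i| + 1) * r u) (u : List Sig) :
    (n + 1) * h u ≤ (∑ i, |β i| + 1) * (∑ i, |γ i| + 1) * r u := by
  set B := ∑ i, |β i| + 1
  set C := ∑ i, |γ i| + 1
  have hB : 0 < B := by positivity
  set r' := fun u => B * C * r u - n * h u
  have hr'0 : ∀ u, 0 ≤ r' u := fun u => sub_nonneg.mpr (hn u)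
  have hr'add : ∀ u, ∑ a, r' (u ++ [a]) = r' u := fun u => by
    simp only [r', Finset.sum_sub_distrib, ← Finset.mul_sum, hradd, hhadd]
  have hBr : B * C * r u ≤ B * r' u :=
    calc B * C * r u = ∑ i, β i * r' (u ++ s i) := by
          simp only [r', hvan, mul_zero, sub_zero, hβ u, Finset.mul_sum]
          exact Finset.sum_congr rfl fun i _ => by ring
      _ ≤ B * r' u := sum_mul_apply_append_le hr'0 hr'add β u
  have hh : h u ≤ C * r u := hγ u ▸ sum_mul_apply_append_le hr0 hradd γ u
  have : n * h u ≤ B * C * r u - C * r u :=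
    le_of_mul_le_mul_left (by simp only [r'] at hBr; linarith) hB
  linarith

theorem nonpos_of_sum_mul_apply_append (hr0 : ∀ u, 0 ≤ r u)
    (hradd : ∀ u, ∑ a, r (u ++ [a]) = r u) (hhadd : ∀ u, ∑ a, h (u ++ [a]) = h u)
    {β γ : ι → ℝ} (hβ : ∀ u, r u = ∑ i, β i * r (u ++ s i))
    (hγ : ∀ u, h u = ∑ i, γ i * r (u ++ s i)) (hvan : ∀ u i, h (u ++ s i) = 0)
    (u : List Sig) : h u ≤ 0 := by
  set K := (∑ i, |β i| + 1) * (∑ i, |γ i| + 1)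
  have hK : ∀ n : ℕ, ∀ u, n * h u ≤ K * r u := by
    intro n
    induction n with
    | zero => simpa [K] using fun u => mul_nonneg (by positivity) (hr0 u)
    | succ n ih => exact_mod_cast succ_mul_le_of_mul_le hr0 hradd hhadd hβ hγ hvan ih
  by_contra! hpos
  obtain ⟨n, hn⟩ := exists_nat_gt (K * r u / h u)
  have := hK n u
  rw [div_lt_iff₀ hpos] at hn
  linarith

theorem le_of_apply_append_eq {p q : List Sig → ℝ} (hq0 : ∀ u, 0 ≤ q u)
    (hpadd : ∀ u, ∑ a, p (u ++ [a]) = p u) (hqadd : ∀ u, ∑ a, q (u ++ [a]) = q u)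
    {β β' : ι → ℝ} (hβ : ∀ u, p u = ∑ i, β i * p (u ++ s i))
    (hβ' : ∀ u, q u = ∑ i, β' i * q (u ++ s i)) (heq : ∀ u i, p (u ++ s i) = q (u ++ s i))
    (u : List Sig) : p u ≤ q u := by
  have hdiff : ∀ u, p u - q u = ∑ i, (β i - β' i) * q (u ++ s i) := fun u => by
    rw [hβ u, hβ' u]
    simp only [heq, sub_mul, Finset.sum_sub_distrib]
  have := nonpos_of_sum_mul_apply_append hq0 hqadd
    (fun u => by simp only [Finset.sum_sub_distrib, hpadd, hqadd]) hβ' hdiff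
    (fun u i => sub_eq_zero.mpr (heq u i)) u
  linarith

end Positivity

theorem apply_append_eq_of_eq_on_basis {Sig : Type*} {p q : List Sig → ℝ}
    {I J : Finset (List Sig)}
    (hp : ∀ x, ∃ c : I → ℝ, ∀ u, p (u ++ x) = ∑ v : I, c v * p (u ++ v))
    (hq : ∀ x, ∃ c : I → ℝ, ∀ u, q (u ++ x) = ∑ v : I, c v * q (u ++ v))
    (hinj : Function.Injective
      (Matrix.of fun (w : J) (v : I) => p ((w : List Sig) ++ (v : List Sig))).mulVec)
    (h1 : ∀ v ∈ I, p v = q v)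
    (h2 : ∀ v ∈ I, ∀ w ∈ J, p (w ++ v) = q (w ++ v))
    (h3 : ∀ v ∈ I, ∀ w ∈ J, ∀ a : Sig, p (w ++ a :: v) = q (w ++ a :: v))
    (u : List Sig) : ∀ v ∈ I, p (u ++ v) = q (u ++ v) := by
  induction u using List.reverseRecOn with
  | nil => simpa using h1
  | append_singleton u a ih =>
    intro v hv
    obtain ⟨c, hc⟩ := hp (a :: v)
    obtain ⟨c', hc'⟩ := hq (a :: v)
    -- Both coefficient vectors solve `P_{JI} c = (p (w ++ a :: v))_{w ∈ J}`.
    have hcc : c = c' := hinj <| funext fun w => by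
      simp only [Matrix.mulVec, dotProduct, Matrix.of_apply]
      calc ∑ v', p (↑w ++ ↑v') * c v' = p (w ++ a :: v) := by
            rw [hc]; exact Finset.sum_congr rfl fun _ _ => mul_comm _ _
        _ = q (w ++ a :: v) := h3 v hv w w.2 a
        _ = ∑ v', p (↑w ++ ↑v') * c' v' := by
            rw [hc']; exact Finset.sum_congr rfl fun v' _ => by rw [h2 v' v'.2 w w.2, mul_comm]
    calc p (u ++ [a] ++ v) = ∑ v' : I, c v' * p (u ++ v') := by simp [hc]
      _ = ∑ v' : I, c' v' * q (u ++ v') :=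
          Finset.sum_congr rfl fun v' _ => by rw [hcc, ih v' v'.2]
      _ = q (u ++ [a] ++ v) := by simp [hc']

theorem equivalence_criterion_general {Sig : Type*} [Fintype Sig]
    (p q : List Sig → ℝ)
    (hpnn : ∀ v, 0 ≤ p v) (hqnn : ∀ v, 0 ≤ q v)
    (hpadd : ∀ w : List Sig, ∑ a : Sig, p (w ++ [a]) = p w)
    (hqadd : ∀ w : List Sig, ∑ a : Sig, q (w ++ [a]) = q w)
    (hpfin : FiniteDimensional ℝ (rowSpan p))
    (hqfin : FiniteDimensional ℝ (rowSpan q))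
    (I J : Finset (List Sig))
    (hbp : IsBasisPair p I J) (hbq : IsBasisPair q I J)
    (h1 : ∀ v ∈ I, p v = q v)
    (h2 : ∀ v ∈ I, ∀ w ∈ J, p (w ++ v) = q (w ++ v))
    (h3 : ∀ v ∈ I, ∀ w ∈ J, ∀ a : Sig, p (w ++ a :: v) = q (w ++ a :: v)) :
    p = q := by
  have hp := exists_sum_of_rank_eq hbp.1
  have hq := exists_sum_of_rank_eq hbq.1
  have hinj := Matrix.mulVec_injective_of_rank_eq_card <| by
    rw [hbp.1, Fintype.card_coe, hbp.2.1]
  have heq := apply_append_eq_of_eq_on_basis hp hq hinj h1 h2 h3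
  obtain ⟨β, hβ⟩ := hp []
  obtain ⟨β', hβ'⟩ := hq []
  simp only [List.append_nil] at hβ hβ'
  funext u
  exact le_antisymm (le_of_apply_append_eq hqnn hpadd hqadd hβ hβ' (fun u v => heq u v v.2) u)
    (le_of_apply_append_eq hpnn hqadd hpadd hβ' hβ (fun u v => (heq u v v.2).symm) u)

/-- If `(I,J)` is a basis for both finitary probability functions `p` and `q`, and
`p(v) = q(v)`, `p(wv) = q(wv)`, `p(wav) = q(wav)` for all `v ∈ I`, `w ∈ J`, `a ∈ Σ`,
then `p = q`. -/
theorem equivalence_criterion {Sig : Type*} [Fintype Sig]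
    (p q : List Sig → ℝ)
    (hp0 : p [] = 1) (hq0 : q [] = 1)
    (hpnn : ∀ v, 0 ≤ p v) (hqnn : ∀ v, 0 ≤ q v)
    (hpadd : ∀ w : List Sig, ∑ a : Sig, p (w ++ [a]) = p w)
    (hqadd : ∀ w : List Sig, ∑ a : Sig, q (w ++ [a]) = q w)
    (hpfin : FiniteDimensional ℝ (rowSpan p))
    (hqfin : FiniteDimensional ℝ (rowSpan q))
    (I J : Finset (List Sig))
    (hbp : IsBasisPair p I J) (hbq : IsBasisPair q I J)
    (h1 : ∀ v ∈ I, p v = q v)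
    (h2 : ∀ v ∈ I, ∀ w ∈ J, p (w ++ v) = q (w ++ v))
    (h3 : ∀ v ∈ I, ∀ w ∈ J, ∀ a : Sig, p (w ++ a :: v) = q (w ++ a :: v)) :
    p = q :=
  equivalence_criterion_general p q hpnn hqnn hpadd hqadd hpfin hqfin I J hbp hbq h1 h2 h3
end

section
/- The dimension of a quantum random walk process is at most k², where k is the dimension of the underlying Hilbert space: p(v) := tr(T_v Q_{ψ_0}) satisfies dim span{p_v : v ∈ Σ*} ≤ k², where p_v(w) := p(wv) and T_v denotes the reversed composition T_{v_t}∘⋯∘T_{v_1}. -/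
/-!
Running the walk `v` from a state `Q` gives `C_v Q C_vᴴ`, with `C_v` the product of the Kraus
operators `P a * U` along `v`; so, writing `Q_w` for the state after `w`, cyclicity of the trace
gives `p (w ++ v) = Re tr (C_vᴴ C_v Q_w)`.
Hence every `p_v` is the image of the Hermitian matrix `C_vᴴ C_v` under one fixed `ℝ`-linear
map, and Hermitian `k × k` matrices form a real vector space of dimension `k²`.
-/

open Matrix

theorem Matrix.rank_selfAdjoint_le (n : Type*) [Fintype n] :
    Module.rank ℝ (selfAdjoint.submodule ℝ (Matrix n n ℂ)) ≤ (Fintype.card n ^ 2 : ℕ) := by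
  let f := (LinearMap.mapMatrix (Complex.reLm + Complex.imLm)).comp
    (selfAdjoint.submodule ℝ (Matrix n n ℂ)).subtype
  have hf : Function.Injective f := by
    refine (injective_iff_map_eq_zero f).mpr fun ⟨A, hA⟩ hfA => ?_
    have hH : A.IsHermitian := hA
    have hsum : ∀ i j, (A i j).re + (A i j).im = 0 := fun i j => congrFun₂ hfA i j
    ext i j
    have hij := hsum i j
    -- `A j i = conj (A i j)`, so also `re - im` of `A i j` vanishes
    have hji := hsum j i
    rw [← hH.apply j i] at hji
    simp only [RCLike.star_def, Complex.conj_re, Complex.conj_im] at hji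
    apply Complex.ext <;>
      simp only [ZeroMemClass.coe_zero, zero_apply, Complex.zero_re, Complex.zero_im] <;>
      linarith
  calc Module.rank ℝ (selfAdjoint.submodule ℝ (Matrix n n ℂ))
      ≤ Module.rank ℝ (Matrix n n ℝ) := f.rank_le_of_injective hf
    _ = (Fintype.card n ^ 2 : ℕ) := by
      rw [← Module.finrank_eq_rank]; simp [sq]

theorem List.foldl_mul_mul_star {α M : Type*} [Monoid M] [StarMul M] (f : α → M)
    (l : List α) (x : M) :
    l.foldl (fun y a => f a * y * star (f a)) x
      = (l.map f).reverse.prod * x * star (l.map f).reverse.prod := by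
  induction l generalizing x with
  | nil => simp
  | cons a l ih => rw [foldl_cons, ih]; simp [star_mul, mul_assoc]

universe u v

theorem rank_span_le_of_forall_eq_re_trace {ι : Type u} {n : Type v} [Fintype n]
    (Q : ι → Matrix n n ℂ) (s : Set (ι → ℝ))
    (hs : ∀ f ∈ s, ∃ A : Matrix n n ℂ, A.IsHermitian ∧ f = fun i => (trace (A * Q i)).re) :
    Module.rank ℝ (Submodule.span ℝ s) ≤ (Fintype.card n ^ 2 : ℕ) := by
  let L : Matrix n n ℂ →ₗ[ℝ] ι → ℝ := LinearMap.pi fun i =>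
    Complex.reLm ∘ₗ traceLinearMap n ℝ ℂ ∘ₗ LinearMap.mulRight ℝ (Q i)
  have hs_le : Submodule.span ℝ s ≤ (selfAdjoint.submodule ℝ (Matrix n n ℂ)).map L := by
    refine Submodule.span_le.mpr fun f hf => ?_
    obtain ⟨A, hA, rfl⟩ := hs f hf
    exact ⟨A, hA, rfl⟩
  refine Cardinal.lift_le.{v}.mp ?_
  calc Cardinal.lift.{v} (Module.rank ℝ (Submodule.span ℝ s))
      ≤ Cardinal.lift.{v} (Module.rank ℝ ((selfAdjoint.submodule ℝ (Matrix n n ℂ)).map L)) :=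
        Cardinal.lift_le.mpr (Submodule.rank_mono hs_le)
    _ ≤ Cardinal.lift.{u} (Module.rank ℝ (selfAdjoint.submodule ℝ (Matrix n n ℂ))) :=
        lift_rank_map_le L _
    _ ≤ Cardinal.lift.{u} (Fintype.card n ^ 2 : ℕ) :=
        Cardinal.lift_le.mpr (Matrix.rank_selfAdjoint_le n)
    _ = Cardinal.lift.{v} (Fintype.card n ^ 2 : ℕ) := by
        rw [Cardinal.lift_natCast, Cardinal.lift_natCast]

theorem qrw_dimension_le_general {k : ℕ} {Sig : Type*}
    (U : Matrix (Fin k) (Fin k) ℂ)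
    (P : Sig → Matrix (Fin k) (Fin k) ℂ)
    (ψ₀ : Fin k → ℂ)
    (p : List Sig → ℝ)
    (hp : ∀ v : List Sig,
      p v = (Matrix.trace
        (v.foldl (fun Q a => (P a * U) * Q * (P a * U)ᴴ)
          (Matrix.vecMulVec ψ₀ (star ψ₀)))).re) :
    Module.rank ℝ
      (Submodule.span ℝ {f : List Sig → ℝ | ∃ v : List Sig, f = fun w => p (w ++ v)})
      ≤ (k ^ 2 : ℕ) := by
  set T : List Sig → Matrix (Fin k) (Fin k) ℂ := fun w =>
    w.foldl (fun Q a => (P a * U) * Q * (P a * U)ᴴ) (vecMulVec ψ₀ (star ψ₀))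
  have hT := List.foldl_mul_mul_star (fun a => P a * U)
  simp only [star_eq_conjTranspose] at hT
  refine (rank_span_le_of_forall_eq_re_trace T _ ?_).trans (by simp)
  rintro f ⟨v, rfl⟩
  set C := (v.map fun a => P a * U).reverse.prod
  refine ⟨Cᴴ * C, isHermitian_conjTranspose_mul_self C, funext fun w => ?_⟩
  rw [hp, List.foldl_append, hT, trace_mul_cycle, Matrix.mul_assoc]

/-- The dimension of a quantum random walk process is at most `k²`:
for `p(v) := Re tr(T_v Q_{ψ₀})` (with `T_v` the reversed composition of the `T_a`),
`dim span{p_v : v ∈ Σ*} ≤ k²`. -/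
theorem qrw_dimension_le {k : ℕ} {Sig : Type*} [Fintype Sig]
    (U : Matrix (Fin k) (Fin k) ℂ) (hU : Uᴴ * U = 1 ∧ U * Uᴴ = 1)
    (P : Sig → Matrix (Fin k) (Fin k) ℂ)
    (hPsa : ∀ a, (P a)ᴴ = P a) (hPidem : ∀ a, P a * P a = P a)
    (hPorth : ∀ a b, a ≠ b → P a * P b = 0)
    (hPsum : ∑ a : Sig, P a = 1)
    (ψ₀ : Fin k → ℂ) (hψ₀ : ∑ i, Complex.normSq (ψ₀ i) = 1)
    (p : List Sig → ℝ)
    (hp : ∀ v : List Sig,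
      p v = (Matrix.trace
        (v.foldl (fun Q a => (P a * U) * Q * (P a * U)ᴴ)
          (Matrix.vecMulVec ψ₀ (star ψ₀)))).re) :
    Module.rank ℝ
      (Submodule.span ℝ {f : List Sig → ℝ | ∃ v : List Sig, f = fun w => p (w ++ v)})
      ≤ (k ^ 2 : ℕ) :=
  qrw_dimension_le_general U P ψ₀ p hp
end
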